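/- arXiv:1710.02670 — 4 statements merged into one kernel-verified Lean document; each statement's English description precedes it below -/
import Mathlib

section
/- Let R̂(s) be the twisted transfer operator R̂(s)v = R(e^{-sφ}v) for a Gibbs-Markov map F with strictly positive integrable roof function φ, acting on the space F_θ(Y) of d_θ-Lipschitz functions. If Re s > 0, then R̂(s) has no eigenvalue λ with |λ| = 1 on F_θ(Y). Consequently, if additionally the essential spectral radius of R̂(s) on F_θ(Y) is strictly less than 1, then the spectral radius of R̂(s) is strictly less than 1. -/
/-!
If `R̂(s) v = λ v` with `|λ| ≥ 1`, then, since `R` does not increase the `L¹` norm,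
`∫ |v| ≤ |λ| ∫ |v| = ∫ |R (e^{-sφ} v)| ≤ ∫ e^{-(Re s) φ} |v|`. The weight `e^{-(Re s) φ}` is
strictly below `1` everywhere because `φ > 0` and `Re s > 0`, so `v = 0` almost everywhere.
Hence the spectrum has no point of modulus `≥ 1` once every spectral value of modulus above
some `r < 1` is an eigenvalue, and by compactness of the spectrum its radius is `< 1`.
-/

open MeasureTheory NNReal

section WeightedL1

variable {Y : Type*} [MeasurableSpace Y] {μ : Measure Y}

lemma ae_eq_zero_of_integral_norm_le_integral_mul_norm {E : Type*} [NormedAddCommGroup E]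
    {w : Y → ℝ} (hw : ∀ y, w y < 1) {f : Y → E} (hf : Integrable f μ)
    (hwf : Integrable (fun y => w y * ‖f y‖) μ)
    (h : ∫ y, ‖f y‖ ∂μ ≤ ∫ y, w y * ‖f y‖ ∂μ) : f =ᵐ[μ] 0 := by
  have hle : ∀ y, w y * ‖f y‖ ≤ ‖f y‖ := fun y =>
    mul_le_of_le_one_left (norm_nonneg _) (hw y).le
  have heq : (fun y => w y * ‖f y‖) =ᵐ[μ] fun y => ‖f y‖ :=
    (integral_eq_iff_of_ae_le hwf hf.norm (.of_forall hle)).mp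
      (le_antisymm (integral_mono hwf hf.norm hle) h)
  filter_upwards [heq] with y hy
  have : (1 - w y) * ‖f y‖ = 0 := by linarith
  simpa [(sub_pos.mpr (hw y)).ne'] using this

lemma ae_eq_zero_of_apply_mul_eq_smul {R : (Y → ℂ) → (Y → ℂ)}
    (hR : ∀ g : Y → ℂ, Integrable g μ → ∫ y, ‖R g y‖ ∂μ ≤ ∫ y, ‖g y‖ ∂μ)
    {w : Y → ℂ} (hw : ∀ y, ‖w y‖ < 1) (hw_meas : AEStronglyMeasurable w μ)
    {lam : ℂ} (hlam : 1 ≤ ‖lam‖) {v : Y → ℂ} (hv : Integrable v μ)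
    (heig : R (fun y => w y * v y) = lam • v) : v =ᵐ[μ] 0 := by
  have hwv : Integrable (fun y => w y * v y) μ :=
    hv.bdd_mul hw_meas (.of_forall fun y => (hw y).le)
  refine ae_eq_zero_of_integral_norm_le_integral_mul_norm hw hv
    (by simpa only [norm_mul] using hwv.norm) ?_
  calc ∫ y, ‖v y‖ ∂μ ≤ ‖lam‖ * ∫ y, ‖v y‖ ∂μ :=
        le_mul_of_one_le_left (integral_nonneg fun _ => norm_nonneg _) hlam
    _ = ∫ y, ‖R (fun y => w y * v y) y‖ ∂μ := by
        simp only [heig, Pi.smul_apply, smul_eq_mul, norm_mul, integral_const_mul]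
    _ ≤ ∫ y, ‖w y * v y‖ ∂μ := hR _ hwv
    _ = ∫ y, ‖w y‖ * ‖v y‖ ∂μ := by simp only [norm_mul]

end WeightedL1

lemma norm_cexp_neg_mul_ofReal_lt_one {s : ℂ} (hs : 0 < s.re) {t : ℝ} (ht : 0 < t) :
    ‖Complex.exp (-s * t)‖ < 1 := by
  rw [Complex.norm_exp, Real.exp_lt_one_iff, neg_mul, Complex.neg_re, Complex.re_mul_ofReal]
  exact neg_neg_of_pos (mul_pos hs ht)

lemma spectralRadius_lt_of_forall_nnnorm_lt {𝕜 A : Type*} [NormedField 𝕜] [ProperSpace 𝕜]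
    [NormedRing A] [NormedAlgebra 𝕜 A] [CompleteSpace A] {a : A} {r : ℝ≥0} (hr : 0 < r)
    (h : ∀ k ∈ spectrum 𝕜 a, ‖k‖₊ < r) : spectralRadius 𝕜 a < r := by
  rcases (spectrum 𝕜 a).eq_empty_or_nonempty with hempty | hne
  · simpa [spectralRadius, hempty] using hr
  · exact spectrum.spectralRadius_lt_of_forall_lt_of_nonempty hne h

theorem stmt_11_general {Y : Type*} [MeasurableSpace Y] (μ : Measure Y)
    (φ : Y → ℝ) (hφpos : ∀ y, 0 < φ y) (hφint : Integrable φ μ)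
    (R : (Y → ℂ) → (Y → ℂ))
    (hRL1 : ∀ g : Y → ℂ, Integrable g μ → ∫ y, ‖R g y‖ ∂μ ≤ ∫ y, ‖g y‖ ∂μ)
    (s : ℂ) (hs : 0 < s.re)
    {X : Type*} [NormedAddCommGroup X] [NormedSpace ℂ X] [CompleteSpace X]
    (T : X →L[ℂ] X) (J : X →ₗ[ℂ] (Y → ℂ))
    (hJ_int : ∀ x : X, Integrable (J x) μ)
    (hJ_inj : ∀ x : X, J x =ᵐ[μ] 0 → x = 0)
    (hJT : ∀ x : X, J (T x) = R fun y => Complex.exp (-s * (φ y : ℂ)) * J x y) :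
    (∀ lam : ℂ, ‖lam‖ = 1 → ∀ x : X, T x = lam • x → x = 0) ∧
    ((∃ r : ℝ, r < 1 ∧ ∀ lam ∈ spectrum ℂ T, r < ‖lam‖ → ∃ x : X, x ≠ 0 ∧ T x = lam • x) →
      spectralRadius ℂ T < 1) := by
  have hweight_meas : AEStronglyMeasurable (fun y => Complex.exp (-s * (φ y : ℂ))) μ :=
    (by fun_prop : Continuous fun t : ℝ => Complex.exp (-s * t)).comp_aestronglyMeasurable
      hφint.aestronglyMeasurable
  have eigenvector_eq_zero : ∀ lam : ℂ, 1 ≤ ‖lam‖ → ∀ x : X, T x = lam • x → x = 0 := by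
    intro lam hlam x hx
    refine hJ_inj x (ae_eq_zero_of_apply_mul_eq_smul hRL1
      (fun y => norm_cexp_neg_mul_ofReal_lt_one hs (hφpos y)) hweight_meas hlam (hJ_int x) ?_)
    rw [← hJT, hx, map_smul]
  refine ⟨fun lam hlam => eigenvector_eq_zero lam hlam.ge, ?_⟩
  rintro ⟨r, hr, hev⟩
  refine mod_cast spectralRadius_lt_of_forall_nnnorm_lt one_pos fun lam hlam => ?_
  by_contra! hge
  have hge' : 1 ≤ ‖lam‖ := mod_cast hge
  obtain ⟨x, hx0, hx⟩ := hev lam hlam (hr.trans_le hge')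
  exact hx0 (eigenvector_eq_zero lam hge' x hx)

theorem stmt_11 {Y : Type*} [MeasurableSpace Y] (μ : Measure Y) [IsProbabilityMeasure μ]
    (φ : Y → ℝ) (hφpos : ∀ y, 0 < φ y) (hφint : Integrable φ μ)
    (R : (Y → ℂ) → (Y → ℂ))
    (hRL1 : ∀ g : Y → ℂ, Integrable g μ → ∫ y, ‖R g y‖ ∂μ ≤ ∫ y, ‖g y‖ ∂μ)
    (s : ℂ) (hs : 0 < s.re)
    {X : Type*} [NormedAddCommGroup X] [NormedSpace ℂ X] [CompleteSpace X]
    (T : X →L[ℂ] X) (J : X →ₗ[ℂ] (Y → ℂ))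
    (hJ_int : ∀ x : X, Integrable (J x) μ)
    (hJ_inj : ∀ x : X, J x =ᵐ[μ] 0 → x = 0)
    (hJT : ∀ x : X, J (T x) = R fun y => Complex.exp (-s * (φ y : ℂ)) * J x y) :
    (∀ lam : ℂ, ‖lam‖ = 1 → ∀ x : X, T x = lam • x → x = 0) ∧
    ((∃ r : ℝ, r < 1 ∧ ∀ lam ∈ spectrum ℂ T, r < ‖lam‖ → ∃ x : X, x ≠ 0 ∧ T x = lam • x) →
      spectralRadius ℂ T < 1) :=
  stmt_11_general μ φ hφpos hφint R hRL1 s hs T J hJ_int hJ_inj hJT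
end

section
/- Suppose L₁, L₂, L₃ are positive reals such that ρ = (L₁−L₃)/(L₂−L₃) is Diophantine of exponent α' > 2, i.e. there is c > 0 with |ρ − m₁/m₂| ≥ c|m₂|^{-α'} for all but finitely many integer pairs (m₁,m₂) with m₂ ≠ 0. Fix α > α'. Then there do not exist sequences b_k ∈ ℝ with |b_k| → ∞, n_k ∈ ℕ with n_k = O(log|b_k|), ψ_k ∈ ℝ, and a constant C > 0 such that dist(b_k n_k L_i − ψ_k, 2πℤ) ≤ C|b_k|^{-α} for i = 1, 2, 3 and all k. -/
open Filter Real Topology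

/-!
Subtracting the relation for `L₃` from those for `L₁` and `L₂` eliminates `ψ_k`: with
`t_k = b_k n_k (L₂ - L₃)` there are integers `p_k, q_k` such that `t_k - 2π q_k` and
`ρ t_k - 2π p_k` are `O(|b_k|^{-α})`, hence `|ρ - p_k / q_k| = O(|b_k|^{-α} / |q_k|)`.
Moreover `|q_k| → ∞`, and `|q_k| = O(|b_k| log |b_k|) = O(|b_k|^{1 + δ})` for every `δ > 0`.
Taking `(1 + δ)(α' - 1) < α`, the error is eventually below `c |q_k|^{-α'}`, so infinitely many
pairs `(p_k, q_k)` violate the Diophantine property.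
-/

lemma abs_mul_sub_sub_mul_intCast_sub_le {t L L' ψ a ε : ℝ} {m m' : ℤ}
    (h : |t * L - ψ - a * m| ≤ ε) (h' : |t * L' - ψ - a * m'| ≤ ε) :
    |t * (L - L') - a * ((m - m' : ℤ) : ℝ)| ≤ 2 * ε :=
  calc |t * (L - L') - a * ((m - m' : ℤ) : ℝ)|
      = |(t * L - ψ - a * m) - (t * L' - ψ - a * m')| := by push_cast; ring_nf
    _ ≤ |t * L - ψ - a * m| + |t * L' - ψ - a * m'| := abs_sub _ _
    _ ≤ 2 * ε := by linarith

lemma tendsto_abs_atTop_of_abs_sub_mul_le {ι : Type*} {l : Filter ι} {x q : ι → ℝ} {a M : ℝ}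
    (ha : 0 < a) (hx : Tendsto (fun i => |x i|) l atTop)
    (h : ∀ᶠ i in l, |x i - a * q i| ≤ M) :
    Tendsto (fun i => |q i|) l atTop := by
  refine tendsto_atTop_mono' l ?_ ((tendsto_atTop_add_const_right l (-M) hx).atTop_div_const ha)
  filter_upwards [h] with i hi
  have := abs_sub_abs_le_abs_sub (x i) (a * q i)
  rw [abs_mul, abs_of_pos ha] at this
  rw [div_le_iff₀ ha]
  linarith

lemma log_add_one_le_rpow {x δ : ℝ} (hx : 1 ≤ x) (hδ : 0 < δ) :
    log x + 1 ≤ (δ⁻¹ + 1) * x ^ δ := by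
  have hlog := log_le_rpow_div (zero_le_one.trans hx) hδ
  have hone : 1 ≤ x ^ δ := one_le_rpow hx hδ.le
  rw [div_eq_inv_mul] at hlog
  linarith

lemma rpow_neg_mul_rpow_le {B Q A α β γ : ℝ} (hB : 0 < B) (hQ : 0 ≤ Q) (hβ : 0 ≤ β)
    (hQB : Q ≤ A * B ^ γ) :
    B ^ (-α) * Q ^ β ≤ A ^ β * B ^ (γ * β - α) := by
  have hA : 0 ≤ A := nonneg_of_mul_nonneg_left (hQ.trans hQB) (rpow_pos_of_pos hB γ)
  calc B ^ (-α) * Q ^ β ≤ B ^ (-α) * (A * B ^ γ) ^ β := by gcongr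
    _ = A ^ β * B ^ (γ * β - α) := by
      rw [mul_rpow hA (rpow_nonneg hB.le γ), ← rpow_mul hB.le, sub_eq_add_neg, rpow_add hB]
      ring

lemma abs_sub_div_lt_of_abs_sub_mul_le {ρ x p q a η c β : ℝ} (ha : 0 < a) (hq : q ≠ 0)
    (hx : |x - a * q| ≤ η) (hρx : |ρ * x - a * p| ≤ η)
    (hsmall : (|ρ| + 1) * η * |q| ^ (β - 1) < a * c) :
    |ρ - p / q| < c * |q| ^ (-β) := by
  have hQ : 0 < |q| := abs_pos.2 hq
  have hid : -ρ * (x - a * q) + (ρ * x - a * p) = a * q * (ρ - p / q) := by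
    field_simp
    ring
  have hnum : a * |q| * |ρ - p / q| ≤ (|ρ| + 1) * η :=
    calc a * |q| * |ρ - p / q| = |-ρ * (x - a * q) + (ρ * x - a * p)| := by
          rw [hid, abs_mul, abs_mul, abs_of_pos ha]
      _ ≤ |ρ| * η + η := by
          refine (abs_add_le _ _).trans (add_le_add ?_ hρx)
          rw [abs_mul, abs_neg]
          gcongr
      _ = (|ρ| + 1) * η := by ring
  have hpow : |q| ^ (β - 1) * |q| ^ (-β) * |q| = 1 := by
    rw [← rpow_add hQ, ← rpow_add_one hQ.ne', show β - 1 + -β + 1 = 0 by ring, rpow_zero]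
  refine lt_of_mul_lt_mul_left ?_ (by positivity : 0 ≤ a * |q| * |q| ^ (β - 1))
  calc a * |q| * |q| ^ (β - 1) * |ρ - p / q| = a * |q| * |ρ - p / q| * |q| ^ (β - 1) := by ring
    _ ≤ (|ρ| + 1) * η * |q| ^ (β - 1) := by gcongr
    _ < a * c := hsmall
    _ = a * |q| * |q| ^ (β - 1) * (c * |q| ^ (-β)) := by linear_combination (-(a * c)) * hpow

lemma Set.Finite.eventually_notMem_of_tendsto_abs_snd {ι : Type*} {l : Filter ι}
    {s : Set (ℤ × ℤ)} (hs : s.Finite) {f : ι → ℤ × ℤ}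
    (hf : Tendsto (fun i => |((f i).2 : ℝ)|) l atTop) :
    ∀ᶠ i in l, f i ∉ s := by
  obtain ⟨M, hM⟩ := (hs.image fun p => |(p.2 : ℝ)|).bddAbove
  filter_upwards [hf.eventually_gt_atTop M] with i hi hmem
  exact (hM ⟨_, hmem, rfl⟩).not_gt hi

section Approximation

variable {b : ℕ → ℝ} {n : ℕ → ℕ} {p q : ℕ → ℤ} {ρ D a c C α : ℝ}

lemma tendsto_abs_intCast_atTop_of_approx (ha : 0 < a) (hD : D ≠ 0) (hα : 0 < α)
    (hb : Tendsto (fun k => |b k|) atTop atTop) (hn : ∀ k, 1 ≤ n k)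
    (hq : ∀ k, |b k * n k * D - a * q k| ≤ C * |b k| ^ (-α)) :
    Tendsto (fun k => |(q k : ℝ)|) atTop atTop := by
  have herr : Tendsto (fun k => C * |b k| ^ (-α)) atTop (𝓝 0) := by
    simpa using ((tendsto_rpow_neg_atTop hα).comp hb).const_mul C
  refine tendsto_abs_atTop_of_abs_sub_mul_le ha (tendsto_atTop_mono (fun k => ?_)
    (hb.atTop_mul_const (abs_pos.2 hD)))
    ((herr.eventually (eventually_le_nhds one_pos)).mono fun k hk => (hq k).trans hk)
  rw [abs_mul, abs_mul, Nat.abs_cast]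
  gcongr
  exact le_mul_of_one_le_right (abs_nonneg _) (by exact_mod_cast hn k)

lemma eventually_abs_intCast_le_rpow {C' δ : ℝ} (ha : 0 < a) (hC : 0 ≤ C) (hα : 0 ≤ α)
    (hC' : 0 ≤ C') (hδ : 0 < δ) (hb : Tendsto (fun k => |b k|) atTop atTop)
    (hn : ∀ k, (n k : ℝ) ≤ C' * (log |b k| + 1))
    (hq : ∀ k, |b k * n k * D - a * q k| ≤ C * |b k| ^ (-α)) :
    ∀ᶠ k in atTop, |(q k : ℝ)| ≤ (|D| * (C' * (δ⁻¹ + 1)) + C) / a * |b k| ^ (1 + δ) := by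
  filter_upwards [hb.eventually_ge_atTop 1] with k hB
  have hB0 : 0 < |b k| := one_pos.trans_le hB
  have hnδ : (n k : ℝ) ≤ C' * (δ⁻¹ + 1) * |b k| ^ δ := (hn k).trans <| by
    rw [mul_assoc]
    exact mul_le_mul_of_nonneg_left (log_add_one_le_rpow hB hδ) hC'
  have herr : C * |b k| ^ (-α) ≤ C * |b k| ^ (1 + δ) :=
    mul_le_mul_of_nonneg_left (rpow_le_rpow_of_exponent_le hB (by linarith)) hC
  have htri : a * |(q k : ℝ)| ≤ |b k| * n k * |D| + C * |b k| ^ (-α) := by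
    have := (abs_sub_abs_le_abs_sub (a * (q k : ℝ)) (b k * n k * D)).trans
      ((abs_sub_comm _ _).trans_le (hq k))
    rw [abs_mul, abs_of_pos ha, abs_mul, abs_mul, Nat.abs_cast] at this
    linarith
  have hmain : |b k| * n k * |D| ≤ |D| * (C' * (δ⁻¹ + 1)) * |b k| ^ (1 + δ) := by
    rw [rpow_add hB0, rpow_one]
    nlinarith [mul_le_mul_of_nonneg_left hnδ (mul_nonneg hB0.le (abs_nonneg D))]
  rw [div_mul_eq_mul_div, le_div_iff₀ ha]
  linarith

lemma eventually_abs_sub_div_lt_of_approx {α' A γ : ℝ} (ha : 0 < a) (hc : 0 < c) (hC : 0 ≤ C)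
    (hα' : 1 < α') (hγ : γ * (α' - 1) < α) (hb : Tendsto (fun k => |b k|) atTop atTop)
    (hq_tendsto : Tendsto (fun k => |(q k : ℝ)|) atTop atTop)
    (hq_le : ∀ᶠ k in atTop, |(q k : ℝ)| ≤ A * |b k| ^ γ)
    (hq : ∀ k, |b k * n k * D - a * q k| ≤ C * |b k| ^ (-α))
    (hp : ∀ k, |ρ * (b k * n k * D) - a * p k| ≤ C * |b k| ^ (-α)) :
    ∀ᶠ k in atTop, q k ≠ 0 ∧ |ρ - p k / q k| < c * |(q k : ℝ)| ^ (-α') := by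
  set K := (|ρ| + 1) * C * A ^ (α' - 1)
  have hdecay : Tendsto (fun k => K * |b k| ^ (-(α - γ * (α' - 1)))) atTop (𝓝 0) := by
    simpa using ((tendsto_rpow_neg_atTop (sub_pos.2 hγ)).comp hb).const_mul K
  filter_upwards [hq_tendsto.eventually_ge_atTop 1, hb.eventually_ge_atTop 1, hq_le,
    hdecay.eventually (gt_mem_nhds (mul_pos ha hc))] with k hq1 hB hq_le hdecay
  have hq0 : (q k : ℝ) ≠ 0 := abs_pos.1 (one_pos.trans_le hq1)
  refine ⟨by exact_mod_cast hq0, abs_sub_div_lt_of_abs_sub_mul_le ha hq0 (hq k) (hp k) ?_⟩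
  calc (|ρ| + 1) * (C * |b k| ^ (-α)) * |(q k : ℝ)| ^ (α' - 1)
      = (|ρ| + 1) * C * (|b k| ^ (-α) * |(q k : ℝ)| ^ (α' - 1)) := by ring
    _ ≤ (|ρ| + 1) * C * (A ^ (α' - 1) * |b k| ^ (γ * (α' - 1) - α)) := by
      refine mul_le_mul_of_nonneg_left ?_ (by positivity)
      exact rpow_neg_mul_rpow_le (one_pos.trans_le hB) (abs_nonneg _) (by linarith) hq_le
    _ = K * |b k| ^ (-(α - γ * (α' - 1))) := by rw [neg_sub]; ring
    _ < a * c := hdecay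

end Approximation

theorem stmt_14_general (L₁ L₂ L₃ : ℝ)
    (hne : L₂ ≠ L₃) (α' : ℝ) (hα' : 2 < α') (c : ℝ) (hc : 0 < c)
    (hDio : Set.Finite {p : ℤ × ℤ | p.2 ≠ 0 ∧
      |(L₁ - L₃) / (L₂ - L₃) - (p.1 : ℝ) / (p.2 : ℝ)| < c * |(p.2 : ℝ)| ^ (-α')})
    (α : ℝ) (hα : α' < α) :
    ¬ ∃ (b : ℕ → ℝ) (n : ℕ → ℕ) (ψ : ℕ → ℝ) (C C' : ℝ),
      0 < C ∧ 0 < C' ∧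
      Tendsto (fun k => |b k|) atTop atTop ∧
      (∀ k, 1 ≤ n k) ∧
      (∀ k, (n k : ℝ) ≤ C' * (Real.log |b k| + 1)) ∧
      (∀ k, ∃ m : ℤ, |b k * n k * L₁ - ψ k - 2 * π * m| ≤ C * |b k| ^ (-α)) ∧
      (∀ k, ∃ m : ℤ, |b k * n k * L₂ - ψ k - 2 * π * m| ≤ C * |b k| ^ (-α)) ∧
      (∀ k, ∃ m : ℤ, |b k * n k * L₃ - ψ k - 2 * π * m| ≤ C * |b k| ^ (-α)) := by
  rintro ⟨b, n, ψ, C, C', hC, hC', hb, hn1, hnlog, hL₁, hL₂, hL₃⟩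
  choose m₁ hm₁ using hL₁
  choose m₂ hm₂ using hL₂
  choose m₃ hm₃ using hL₃
  have hD : L₂ - L₃ ≠ 0 := sub_ne_zero.2 hne
  have hπ : 0 < 2 * π := by positivity
  have hq (k : ℕ) : |b k * n k * (L₂ - L₃) - 2 * π * ((m₂ k - m₃ k : ℤ) : ℝ)| ≤
      2 * C * |b k| ^ (-α) := by
    rw [mul_assoc 2 C]
    exact abs_mul_sub_sub_mul_intCast_sub_le (hm₂ k) (hm₃ k)
  have hp (k : ℕ) : |(L₁ - L₃) / (L₂ - L₃) * (b k * n k * (L₂ - L₃)) -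
      2 * π * ((m₁ k - m₃ k : ℤ) : ℝ)| ≤ 2 * C * |b k| ^ (-α) := by
    rw [mul_left_comm, div_mul_cancel₀ _ hD, mul_assoc 2 C]
    exact abs_mul_sub_sub_mul_intCast_sub_le (hm₁ k) (hm₃ k)
  have hq_tendsto := tendsto_abs_intCast_atTop_of_approx hπ hD (by linarith) hb hn1 hq
  set δ := (α - α') / (α' - 1)
  have hδ : 0 < δ := div_pos (by linarith) (by linarith)
  have hγ : (1 + δ) * (α' - 1) < α := by
    have : δ * (α' - 1) = α - α' := div_mul_cancel₀ _ (by linarith)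
    linarith
  have hq_le :=
    eventually_abs_intCast_le_rpow hπ (by positivity) (by linarith) hC'.le hδ hb hnlog hq
  have hgood := eventually_abs_sub_div_lt_of_approx hπ hc (by positivity) (by linarith) hγ hb
    hq_tendsto hq_le hq hp
  obtain ⟨k, hk, hk'⟩ := (hgood.and (hDio.eventually_notMem_of_tendsto_abs_snd
    (f := fun k => (m₁ k - m₃ k, m₂ k - m₃ k)) hq_tendsto)).exists
  exact hk' hk

theorem stmt_14 (L₁ L₂ L₃ : ℝ) (h₁ : 0 < L₁) (h₂ : 0 < L₂) (h₃ : 0 < L₃)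
    (hne : L₂ ≠ L₃) (α' : ℝ) (hα' : 2 < α') (c : ℝ) (hc : 0 < c)
    (hDio : Set.Finite {p : ℤ × ℤ | p.2 ≠ 0 ∧
      |(L₁ - L₃) / (L₂ - L₃) - (p.1 : ℝ) / (p.2 : ℝ)| < c * |(p.2 : ℝ)| ^ (-α')})
    (α : ℝ) (hα : α' < α) :
    ¬ ∃ (b : ℕ → ℝ) (n : ℕ → ℕ) (ψ : ℕ → ℝ) (C C' : ℝ),
      0 < C ∧ 0 < C' ∧
      Tendsto (fun k => |b k|) atTop atTop ∧
      (∀ k, 1 ≤ n k) ∧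
      (∀ k, (n k : ℝ) ≤ C' * (Real.log |b k| + 1)) ∧
      (∀ k, ∃ m : ℤ, |b k * n k * L₁ - ψ k - 2 * π * m| ≤ C * |b k| ^ (-α)) ∧
      (∀ k, ∃ m : ℤ, |b k * n k * L₂ - ψ k - 2 * π * m| ≤ C * |b k| ^ (-α)) ∧
      (∀ k, ∃ m : ℤ, |b k * n k * L₃ - ψ k - 2 * π * m| ≤ C * |b k| ^ (-α)) :=
  stmt_14_general L₁ L₂ L₃ hne α' hα' c hc hDio α hα
end

section
/- Let (Y,μ) be a probability space, F : Y → Y measure-preserving, φ : Y → (0,∞) integrable. For s ∈ ℂ with Re s > 0 define V̂(s)(y) = ∫₀^{φ(y)} e^{-s(φ(y)-u)} v(y,u) du and ŵ(s)(y) = ∫₀^{φ(y)} e^{-su} w(y,u) du, and v_s(y) = ∫₀^{φ(y)} e^{su} v(y,u) du, for v, w ∈ L^∞(Y^φ). Let R be the transfer operator of F and R̂(s)v = R(e^{-sφ}v). Then for all n ≥ 1, R^n(e^{-sφ_n} v_s) = R̂(s)^{n-1} R V̂(s), where φ_n = Σ_{j=0}^{n-1} φ∘F^j. -/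
/-!
Since `φ_n = φ + φ_{n-1} ∘ F`, the weight `e^{-sφ_n}` factors as `e^{-sφ} · (e^{-sφ_{n-1}} ∘ F)`,
and `R (g · h ∘ F) = (R g) · h` pulls the second factor out of `R`. Iterating,
`R^n (e^{-sφ_n} g) = R̂(s)^n g` for every `g`; for `g = v_s` one application of `R` is split off
and `e^{-sφ} v_s = V̂(s)` finishes the proof.
-/

theorem iterate_apply_birkhoffProd_mul {Y M : Type*} [CommMonoid M] (F : Y → Y)
    (R : (Y → M) → (Y → M))
    (hR : ∀ g h : Y → M, (R fun y => g y * h (F y)) = fun y => R g y * h y)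
    (w : Y → M) (m : ℕ) (g : Y → M) :
    R^[m] (fun y => (∏ j ∈ Finset.range m, w (F^[j] y)) * g y) =
      (fun g : Y → M => R fun y => w y * g y)^[m] g := by
  induction m generalizing g with
  | zero => simp
  | succ m ih =>
    have hcocycle : (fun y => (∏ j ∈ Finset.range (m + 1), w (F^[j] y)) * g y) =
        fun y => (w y * g y) * ∏ j ∈ Finset.range m, w (F^[j] (F y)) := by
      funext y
      rw [Finset.prod_range_succ', Function.iterate_zero_apply]
      simp only [Function.iterate_succ_apply]
      ac_rfl
    rw [Function.iterate_succ_apply, Function.iterate_succ_apply, hcocycle,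
      hR (fun y => w y * g y) fun y => ∏ j ∈ Finset.range m, w (F^[j] y), ← ih]
    simp only [mul_comm]

theorem Complex.exp_neg_mul_mul_integral_exp_mul (s : ℂ) (a t : ℝ) (f : ℝ → ℂ) :
    Complex.exp (-s * (t : ℂ)) * ∫ u in a..t, Complex.exp (s * (u : ℂ)) * f u =
      ∫ u in a..t, Complex.exp (-s * ((t - u : ℝ) : ℂ)) * f u := by
  rw [← intervalIntegral.integral_const_mul]
  refine intervalIntegral.integral_congr fun u _ => ?_
  rw [show -s * ((t - u : ℝ) : ℂ) = -s * t + s * u by push_cast; ring, Complex.exp_add]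
  ring

theorem stmt_15_general {Y : Type*} (F : Y → Y) (φ : Y → ℝ)
    (v : Y × ℝ → ℂ) (s : ℂ)
    (R : (Y → ℂ) → (Y → ℂ))
    (hR : ∀ g h : Y → ℂ, (R fun y => g y * h (F y)) = fun y => R g y * h y)
    (n : ℕ) (hn : 1 ≤ n) :
    R^[n] (fun y => Complex.exp (-s * ((∑ j ∈ Finset.range n, φ (F^[j] y) : ℝ) : ℂ)) *
        ∫ u in (0:ℝ)..(φ y), Complex.exp (s * (u : ℂ)) * v (y, u)) =
      (fun g : Y → ℂ => R fun y => Complex.exp (-s * (φ y : ℂ)) * g y)^[n - 1]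
        (R fun y => ∫ u in (0:ℝ)..(φ y),
          Complex.exp (-s * ((φ y - u : ℝ) : ℂ)) * v (y, u)) := by
  have hbirkhoff : ∀ y, Complex.exp (-s * ((∑ j ∈ Finset.range n, φ (F^[j] y) : ℝ) : ℂ)) =
      ∏ j ∈ Finset.range n, Complex.exp (-s * (φ (F^[j] y) : ℂ)) := fun y => by
    rw [Complex.ofReal_sum, Finset.mul_sum, Complex.exp_sum]
  simp_rw [hbirkhoff]
  rw [iterate_apply_birkhoffProd_mul F R hR fun y => Complex.exp (-s * (φ y : ℂ))]
  obtain ⟨k, rfl⟩ := Nat.exists_eq_add_of_le' hn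
  simp_rw [Function.iterate_succ_apply, Nat.add_sub_cancel,
    Complex.exp_neg_mul_mul_integral_exp_mul]

theorem stmt_15 {Y : Type*} (F : Y → Y) (φ : Y → ℝ) (hφpos : ∀ y, 0 < φ y)
    (v : Y × ℝ → ℂ) (s : ℂ) (hs : 0 < s.re)
    (R : (Y → ℂ) → (Y → ℂ))
    (hR : ∀ g h : Y → ℂ, (R fun y => g y * h (F y)) = fun y => R g y * h y)
    (n : ℕ) (hn : 1 ≤ n) :
    R^[n] (fun y => Complex.exp (-s * ((∑ j ∈ Finset.range n, φ (F^[j] y) : ℝ) : ℂ)) *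
        ∫ u in (0:ℝ)..(φ y), Complex.exp (s * (u : ℂ)) * v (y, u)) =
      (fun g : Y → ℂ => R fun y => Complex.exp (-s * (φ y : ℂ)) * g y)^[n - 1]
        (R fun y => ∫ u in (0:ℝ)..(φ y),
          Complex.exp (-s * ((φ y - u : ℝ) : ℂ)) * v (y, u)) :=
  stmt_15_general F φ v s R hR n hn
end

section
/- Let ω ∈ (0,π) and suppose (ω_N)_{N≥1} is a sequence with ω_N ∈ (ω₀ − π/12, ω₀ + π/12) for some fixed ω₀. Then there do not exist an integer sequence M(k) → ∞ such that for every fixed j ∈ ℤ, lim_{k→∞} ((M(k)+j)ω + ω_{M(k)+j}) = π/2 (mod π). -/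
/-! Subtracting the limits at the shifts `j` and `0` cancels `π/2` and leaves
`j ω + (ω_{M+j} - ω_M) → 0 (mod π)`; since the phases `ω_N` vary by less than `π/6`, every
multiple `j ω` lies within `π/6` of `πℤ`. This fails for `ω ∈ (0, π)`: some multiple of `ω`
or of `π - ω` falls strictly inside `(π/6, 5π/6)`. -/

open Filter Real

lemma exists_nat_mul_mem_Ioo {ω a b : ℝ} (hω : 0 < ω) (ha : 0 ≤ a) (hωab : ω < b - a) :
    ∃ j : ℕ, (j : ℝ) * ω ∈ Set.Ioo a b := by
  refine ⟨⌊a / ω⌋₊ + 1, ?_, ?_⟩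
  · have := Nat.lt_floor_add_one (a / ω)
    push_cast
    rwa [div_lt_iff₀ hω] at this
  · have := Nat.floor_le (div_nonneg ha hω.le)
    rw [le_div_iff₀ hω] at this
    push_cast
    linarith

lemma exists_int_mul_sub_pi_mul_mem_Ioo {ω : ℝ} (hω : ω ∈ Set.Ioo 0 π) :
    ∃ j n : ℤ, (j : ℝ) * ω - π * n ∈ Set.Ioo (π / 6) (5 * π / 6) := by
  obtain ⟨hω0, hωπ⟩ := hω
  rcases lt_or_ge ω (2 * π / 3) with hsmall | hlarge
  · obtain ⟨j, hj⟩ := exists_nat_mul_mem_Ioo hω0 (by positivity : 0 ≤ π / 6)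
      (by linarith : ω < 5 * π / 6 - π / 6)
    exact ⟨j, 0, by simpa using hj⟩
  · obtain ⟨j, hj1, hj2⟩ := exists_nat_mul_mem_Ioo (sub_pos.2 hωπ) (by positivity : 0 ≤ π / 6)
      (by linarith : π - ω < 5 * π / 6 - π / 6)
    refine ⟨-j, -j, ?_, ?_⟩ <;> push_cast <;> linarith

lemma le_abs_sub_pi_mul {a y : ℝ} (hay : a ≤ y) (hya : y ≤ π - a) (m : ℤ) :
    a ≤ |y - π * m| := by
  rcases le_or_gt m 0 with hm | hm
  · have : (m : ℝ) ≤ 0 := by exact_mod_cast hm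
    exact le_abs.2 (Or.inl (by nlinarith [pi_pos]))
  · have : (1 : ℝ) ≤ m := by exact_mod_cast hm
    exact le_abs.2 (Or.inr (by nlinarith [pi_pos]))

lemma exists_abs_int_mul_sub_pi_mul_lt {ω ω₀ : ℝ} {ωs : ℕ → ℝ}
    (hωs : ∀ N : ℕ, 1 ≤ N → ωs N ∈ Set.Ioo (ω₀ - π / 12) (ω₀ + π / 12))
    {M : ℕ → ℕ} (hM : Tendsto M atTop atTop)
    (hconv : ∀ j : ℤ, ∀ ε > 0, ∃ K : ℕ, ∀ k ≥ K, ∃ m : ℤ,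
      |((M k : ℝ) + (j : ℝ)) * ω + ωs (((M k : ℤ) + j).toNat) - (π / 2 + π * m)| < ε)
    (j : ℤ) {ε : ℝ} (hε : 0 < ε) :
    ∃ m : ℤ, |(j : ℝ) * ω - π * m| < π / 6 + ε := by
  obtain ⟨Kj, hKj⟩ := hconv j (ε / 2) (half_pos hε)
  obtain ⟨K₀, hK₀⟩ := hconv 0 (ε / 2) (half_pos hε)
  obtain ⟨K, hK⟩ := eventually_atTop.1 (hM.eventually_ge_atTop (j.natAbs + 1))
  set k := max (max Kj K₀) K
  have hMk : j.natAbs + 1 ≤ M k := hK k (le_max_right _ _)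
  obtain ⟨mj, hmj⟩ := hKj k (le_trans (le_max_left _ _) (le_max_left _ _))
  obtain ⟨m₀, hm₀⟩ := hK₀ k (le_trans (le_max_right _ _) (le_max_left _ _))
  obtain ⟨hj₁, hj₂⟩ := hωs (((M k : ℤ) + j).toNat) (by omega)
  obtain ⟨h₀₁, h₀₂⟩ := hωs (((M k : ℤ) + 0).toNat) (by omega)
  refine ⟨mj - m₀, abs_lt.2 ⟨?_, ?_⟩⟩ <;>
  · push_cast at hm₀ ⊢
    linarith [(abs_lt.1 hmj).1, (abs_lt.1 hmj).2, (abs_lt.1 hm₀).1, (abs_lt.1 hm₀).2]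

theorem stmt_19 (ω ω₀ : ℝ) (hω : ω ∈ Set.Ioo 0 π)
    (ωs : ℕ → ℝ) (hωs : ∀ N : ℕ, 1 ≤ N → ωs N ∈ Set.Ioo (ω₀ - π / 12) (ω₀ + π / 12)) :
    ¬ ∃ M : ℕ → ℕ, Tendsto M atTop atTop ∧
      ∀ j : ℤ, ∀ ε > 0, ∃ K : ℕ, ∀ k ≥ K, ∃ m : ℤ,
        |((M k : ℝ) + (j : ℝ)) * ω + ωs (((M k : ℤ) + j).toNat) - (π / 2 + π * m)| < ε := by
  rintro ⟨M, hM, hconv⟩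
  obtain ⟨j, n, hy₁, hy₂⟩ := exists_int_mul_sub_pi_mul_mem_Ioo hω
  set y := (j : ℝ) * ω - π * n
  set a := min y (π - y)
  have ha : π / 6 < a := lt_min hy₁ (by linarith)
  obtain ⟨m, hm⟩ := exists_abs_int_mul_sub_pi_mul_lt hωs hM hconv j (sub_pos.2 ha)
  have hfar := le_abs_sub_pi_mul (min_le_left y (π - y))
    (by linarith [min_le_right y (π - y)]) (m - n)
  have hshift : y - π * ((m - n : ℤ) : ℝ) = (j : ℝ) * ω - π * m := by push_cast [y]; ring
  rw [hshift] at hfar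
  linarith
end
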